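/- Let H be a separable complex Hilbert space and R₀ > 0. Let v, w : (R₀,∞) → H be twice continuously differentiable functions such that v, v'', w, w'' all belong to L²H and such that v and w vanish identically on (R₀, R₀+δ) for some δ > 0. Then v', w' belong to L²H, the integrands below are integrable, and ∫_{R₀}^∞ ⟨v''(r), w(r)⟩_H dr = − ∫_{R₀}^∞ ⟨v'(r), w'(r)⟩_H dr. -/

import Mathlib

/-!
Integrating `⟪v', v⟫' = ‖v'‖² + ⟪v'', v⟫` over `[a, b]`, where `⟪v'', v⟫` is integrable, shows
that if `∫_a^b ‖v'‖²` were unbounded then `(‖v‖²)' = 2⟪v, v'⟫` would tend to `+∞`, forcing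
`‖v‖² → ∞` and contradicting `v ∈ L²`; as `v'` vanishes near `R₀`, this gives `v' ∈ L²`.
Then `⟪v', w⟫` and its derivative `⟪v', w'⟫ + ⟪v'', w⟫` are integrable, so `⟪v', w⟫` tends to `0`
at infinity; it also vanishes near `R₀`, and the fundamental theorem of calculus on `(R₀, ∞)` gives
the identity.
-/

open MeasureTheory Set Real Filter Topology

theorem integrable_inner_of_integrable_sq_norm {α 𝕜 E : Type*} [MeasurableSpace α]
    {μ : Measure α} [RCLike 𝕜] [NormedAddCommGroup E] [InnerProductSpace 𝕜 E] {f g : α → E}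
    (hf : AEStronglyMeasurable f μ) (hg : AEStronglyMeasurable g μ)
    (hf2 : Integrable (fun x => ‖f x‖ ^ 2) μ) (hg2 : Integrable (fun x => ‖g x‖ ^ 2) μ) :
    Integrable (fun x => inner 𝕜 (f x) (g x)) μ := by
  refine (hf2.add hg2).mono' (hf.inner hg) (ae_of_all _ fun x => ?_)
  calc ‖inner 𝕜 (f x) (g x)‖ ≤ ‖f x‖ * ‖g x‖ := norm_inner_le_norm _ _
    _ ≤ ‖f x‖ ^ 2 + ‖g x‖ ^ 2 := by
      nlinarith [two_mul_le_add_sq ‖f x‖ ‖g x‖, mul_nonneg (norm_nonneg (f x)) (norm_nonneg (g x))]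

theorem not_integrableOn_Ioi_of_tendsto_atTop {f : ℝ → ℝ} {a : ℝ}
    (hf : Tendsto f atTop atTop) : ¬ IntegrableOn f (Ioi a) := by
  -- `x ↦ x` is unbounded and its derivative `1` is `O(f)`
  refine not_integrableOn_of_tendsto_norm_atTop_of_deriv_isBigO_filter atTop (Ioi_mem_atTop a)
    (Eventually.of_forall fun _ => differentiableAt_id) tendsto_norm_atTop_atTop ?_
  refine Asymptotics.IsBigO.of_bound 1 ?_
  filter_upwards [hf.eventually_ge_atTop 1] with x hx
  simp [abs_of_pos (zero_lt_one.trans_le hx), hx]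

theorem not_integrableOn_Ioi_of_tendsto_deriv_atTop {f f' : ℝ → ℝ} {a : ℝ}
    (hf : ∀ x ∈ Ioi a, HasDerivAt f (f' x) x) (hf' : Tendsto f' atTop atTop) :
    ¬ IntegrableOn f (Ioi a) := by
  obtain ⟨b, hb⟩ := ((hf'.eventually_ge_atTop 1).and (eventually_gt_atTop a)).exists_forall_of_atTop
  have hd : ∀ y ∈ Ici b, HasDerivAt f (f' y) y := fun y hy => hf y (hb y hy).2
  have hgrowth : ∀ x ∈ Ici b, 1 * (x - b) ≤ f x - f b := fun x hx =>
    (convex_Ici b).mul_sub_le_image_sub_of_le_deriv (HasDerivAt.continuousOn hd)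
      (fun y hy => (hd y (interior_subset hy)).differentiableAt.differentiableWithinAt)
      (fun y hy => (hd y (interior_subset hy)).deriv ▸ (hb y (interior_subset hy)).1)
      b self_mem_Ici x hx hx
  refine not_integrableOn_Ioi_of_tendsto_atTop (tendsto_atTop_mono' _ ?_
    (tendsto_atTop_add_const_right _ (f b - b) tendsto_id))
  filter_upwards [eventually_ge_atTop b] with x hx
  linarith [hgrowth x hx, show id x = x from rfl]

theorem integral_Ioi_of_hasDerivAt_of_tendsto_nhdsGT {E : Type*} [NormedAddCommGroup E]
    [NormedSpace ℝ E] [CompleteSpace E] {f f' : ℝ → E} {a : ℝ} {m₀ m : E}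
    (hderiv : ∀ x ∈ Ioi a, HasDerivAt f (f' x) x) (f'int : IntegrableOn f' (Ioi a))
    (h_zero : Tendsto f (𝓝[>] a) (𝓝 m₀)) (h_infty : Tendsto f atTop (𝓝 m)) :
    ∫ x in Ioi a, f' x = m - m₀ := by
  rw [← Ici_sdiff_left] at h_zero
  let g := Function.update f a m₀
  have hderiv' : ∀ x ∈ Ioi a, HasDerivAt g (f' x) x := fun x hx =>
    (hderiv x hx).congr_of_eventuallyEq <| by
      filter_upwards [eventually_ne_nhds (ne_of_gt hx)] with y hy
      exact Function.update_of_ne hy m₀ f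
  have h_infty' : Tendsto g atTop (𝓝 m) := h_infty.congr' <| by
    filter_upwards [eventually_ne_atTop a] with x hx
    exact (Function.update_of_ne hx m₀ f).symm
  simpa [g] using integral_Ioi_of_hasDerivAt_of_tendsto
    (continuousWithinAt_update_same.mpr h_zero) hderiv' f'int h_infty'

theorem integral_Ioi_inner_deriv_left_eq_neg {𝕜 E : Type*} [RCLike 𝕜] [NormedAddCommGroup E]
    [InnerProductSpace 𝕜 E] [NormedSpace ℝ E] {u u' w w' : ℝ → E} {a : ℝ}
    (hu : ∀ x ∈ Ioi a, HasDerivAt u (u' x) x) (hw : ∀ x ∈ Ioi a, HasDerivAt w (w' x) x)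
    (hu'w : IntegrableOn (fun x => inner 𝕜 (u' x) (w x)) (Ioi a))
    (huw' : IntegrableOn (fun x => inner 𝕜 (u x) (w' x)) (Ioi a))
    (huw : IntegrableOn (fun x => inner 𝕜 (u x) (w x)) (Ioi a))
    (h_zero : Tendsto (fun x => inner 𝕜 (u x) (w x)) (𝓝[>] a) (𝓝 0)) :
    ∫ x in Ioi a, inner 𝕜 (u' x) (w x) = -∫ x in Ioi a, inner 𝕜 (u x) (w' x) := by
  have hderiv : ∀ x ∈ Ioi a, HasDerivAt (fun x => inner 𝕜 (u x) (w x))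
      (inner 𝕜 (u x) (w' x) + inner 𝕜 (u' x) (w x)) x :=
    fun x hx => (hu x hx).inner 𝕜 (hw x hx)
  have h_infty := tendsto_zero_of_hasDerivAt_of_integrableOn_Ioi hderiv (huw'.add hu'w) huw
  have hftc := integral_Ioi_of_hasDerivAt_of_tendsto_nhdsGT hderiv (huw'.add hu'w) h_zero h_infty
  rw [integral_add huw' hu'w, sub_zero] at hftc
  linear_combination hftc

theorem intervalIntegral_sq_norm_deriv_eq {F : Type*} [NormedAddCommGroup F]
    [InnerProductSpace ℝ F] {v v' v'' : ℝ → F} {a b : ℝ}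
    (hv : ∀ x ∈ uIcc a b, HasDerivAt v (v' x) x) (hv' : ∀ x ∈ uIcc a b, HasDerivAt v' (v'' x) x)
    (hv''c : ContinuousOn v'' (uIcc a b)) :
    ∫ x in a..b, ‖v' x‖ ^ 2 =
      inner ℝ (v' b) (v b) - inner ℝ (v' a) (v a) - ∫ x in a..b, inner ℝ (v'' x) (v x) := by
  have hvc : ContinuousOn v (uIcc a b) := HasDerivAt.continuousOn hv
  have hsq : ContinuousOn (fun x => ‖v' x‖ ^ 2) (uIcc a b) :=
    (HasDerivAt.continuousOn hv').norm.pow 2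
  have hk : ContinuousOn (fun x => inner ℝ (v'' x) (v x)) (uIcc a b) := hv''c.inner hvc
  have hftc : ∫ x in a..b, (‖v' x‖ ^ 2 + inner ℝ (v'' x) (v x)) =
      inner ℝ (v' b) (v b) - inner ℝ (v' a) (v a) := by
    apply intervalIntegral.integral_eq_sub_of_hasDerivAt
    · intro x hx
      simpa [real_inner_self_eq_norm_sq] using (hv' x hx).inner ℝ (hv x hx)
    · exact (hsq.add hk).intervalIntegrable
  rw [intervalIntegral.integral_add hsq.intervalIntegrable hk.intervalIntegrable] at hftc
  linear_combination hftc

section SecondOrder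

variable {F : Type*} [NormedAddCommGroup F] [InnerProductSpace ℝ F] {v v' v'' : ℝ → F} {R₀ : ℝ}

theorem integrableOn_Ioi_sq_norm_deriv {a : ℝ} (ha : R₀ < a)
    (hv : ∀ x ∈ Ioi R₀, HasDerivAt v (v' x) x) (hv' : ∀ x ∈ Ioi R₀, HasDerivAt v' (v'' x) x)
    (hv''c : ContinuousOn v'' (Ioi R₀)) (hvL2 : IntegrableOn (fun x => ‖v x‖ ^ 2) (Ioi R₀))
    (hv''L2 : IntegrableOn (fun x => ‖v'' x‖ ^ 2) (Ioi R₀)) :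
    IntegrableOn (fun x => ‖v' x‖ ^ 2) (Ioi a) := by
  have hIcc : ∀ {b c : ℝ}, a ≤ b → Icc b c ⊆ Ioi R₀ := fun hb x hx => ha.trans_le (hb.trans hx.1)
  have hint : ∀ b, IntegrableOn (fun x => ‖v' x‖ ^ 2) (Ioc a b) := fun b =>
    (((HasDerivAt.continuousOn hv').norm.pow 2).mono (hIcc le_rfl)).integrableOn_Icc.mono_set
      Ioc_subset_Icc_self
  have hk : IntegrableOn (fun x => inner ℝ (v'' x) (v x)) (Ioi a) :=
    IntegrableOn.mono_set (integrable_inner_of_integrable_sq_norm (𝕜 := ℝ)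
      (hv''c.aestronglyMeasurable measurableSet_Ioi)
      ((HasDerivAt.continuousOn hv).aestronglyMeasurable measurableSet_Ioi) hv''L2 hvL2)
      (Ioi_subset_Ioi ha.le)
  set S : ℝ → ℝ := fun b => ∫ x in Ioc a b, ‖v' x‖ ^ 2 with hS
  have hS_mono : Monotone S := fun b c hbc =>
    setIntegral_mono_set (hint c) (ae_of_all _ fun _ => by positivity)
      (Ioc_subset_Ioc_right hbc).eventuallyLE
  have hS_eq : ∀ b ≥ a, S b =
      inner ℝ (v' b) (v b) - inner ℝ (v' a) (v a) - ∫ x in a..b, inner ℝ (v'' x) (v x) := by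
    intro b hb
    have hsub : uIcc a b ⊆ Ioi R₀ := by rw [uIcc_of_le hb]; exact hIcc le_rfl
    simp only [hS, ← intervalIntegral.integral_of_le hb]
    exact intervalIntegral_sq_norm_deriv_eq (fun x hx => hv x (hsub hx))
      (fun x hx => hv' x (hsub hx)) (hv''c.mono hsub)
  have hS_bdd : BddAbove (range S) := by
    by_contra hunbdd
    have hS_top := tendsto_atTop_atTop_of_monotone' hS_mono hunbdd
    have hrest : Tendsto (fun b => inner ℝ (v' a) (v a) + ∫ x in a..b, inner ℝ (v'' x) (v x))
        atTop (𝓝 (inner ℝ (v' a) (v a) + ∫ x in Ioi a, inner ℝ (v'' x) (v x))) :=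
      tendsto_const_nhds.add (intervalIntegral_tendsto_integral_Ioi a hk tendsto_id)
    have hφ : Tendsto (fun b => 2 * inner ℝ (v b) (v' b)) atTop atTop := by
      refine ((hS_top.atTop_add hrest).congr' ?_).const_mul_atTop two_pos
      filter_upwards [eventually_ge_atTop a] with b hb
      rw [hS_eq b hb, real_inner_comm]
      ring
    exact not_integrableOn_Ioi_of_tendsto_deriv_atTop (fun x hx => (hv x hx).norm_sq) hφ hvL2
  obtain ⟨I, hI⟩ := hS_bdd
  refine integrableOn_Ioi_of_intervalIntegral_norm_bounded I a hint tendsto_id ?_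
  filter_upwards [eventually_ge_atTop a] with b hb
  simpa [intervalIntegral.integral_of_le hb, hS] using hI ⟨b, rfl⟩

theorem integrableOn_Ioi_sq_norm_deriv_of_eventuallyEq_zero
    (hv : ∀ x ∈ Ioi R₀, HasDerivAt v (v' x) x) (hv' : ∀ x ∈ Ioi R₀, HasDerivAt v' (v'' x) x)
    (hv''c : ContinuousOn v'' (Ioi R₀)) (hvL2 : IntegrableOn (fun x => ‖v x‖ ^ 2) (Ioi R₀))
    (hv''L2 : IntegrableOn (fun x => ‖v'' x‖ ^ 2) (Ioi R₀)) (hv0 : v =ᶠ[𝓝[>] R₀] 0) :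
    IntegrableOn (fun x => ‖v' x‖ ^ 2) (Ioi R₀) := by
  obtain ⟨c, hc, hsub⟩ := mem_nhdsGT_iff_exists_Ioo_subset.1 hv0
  obtain ⟨a, hR₀a, hac⟩ := exists_between (mem_Ioi.1 hc)
  have hv'0 : ∀ x ∈ Ioc R₀ a, v' x = 0 := fun x hx =>
    (hv x hx.1).unique <| (hasDerivAt_const x 0).congr_of_eventuallyEq <|
      eventually_of_mem (Ioo_mem_nhds hx.1 (hx.2.trans_lt hac)) fun y hy => hsub hy
  rw [← Ioc_union_Ioi_eq_Ioi hR₀a.le]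
  exact (integrableOn_zero.congr_fun (fun x hx => by simp [hv'0 x hx]) measurableSet_Ioc).union
    (integrableOn_Ioi_sq_norm_deriv hR₀a hv hv' hv''c hvL2 hv''L2)

end SecondOrder

theorem stmt_4_general {H : Type*} [NormedAddCommGroup H] [InnerProductSpace ℂ H]
    (R₀ : ℝ) (v v' v'' w w' w'' : ℝ → H)
    (hv1 : ∀ r ∈ Set.Ioi R₀, HasDerivAt v (v' r) r)
    (hv2 : ∀ r ∈ Set.Ioi R₀, HasDerivAt v' (v'' r) r)
    (hv2c : ContinuousOn v'' (Set.Ioi R₀))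
    (hw1 : ∀ r ∈ Set.Ioi R₀, HasDerivAt w (w' r) r)
    (hw2 : ∀ r ∈ Set.Ioi R₀, HasDerivAt w' (w'' r) r)
    (hw2c : ContinuousOn w'' (Set.Ioi R₀))
    (hvL2 : IntegrableOn (fun r : ℝ => ‖v r‖ ^ 2) (Set.Ioi R₀))
    (hv''L2 : IntegrableOn (fun r : ℝ => ‖v'' r‖ ^ 2) (Set.Ioi R₀))
    (hwL2 : IntegrableOn (fun r : ℝ => ‖w r‖ ^ 2) (Set.Ioi R₀))
    (hw''L2 : IntegrableOn (fun r : ℝ => ‖w'' r‖ ^ 2) (Set.Ioi R₀))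
    (hvvan : ∃ δ > 0, ∀ r ∈ Set.Ioo R₀ (R₀ + δ), v r = 0)
    (hwvan : ∃ δ > 0, ∀ r ∈ Set.Ioo R₀ (R₀ + δ), w r = 0) :
    IntegrableOn (fun r : ℝ => ‖v' r‖ ^ 2) (Set.Ioi R₀) ∧
    IntegrableOn (fun r : ℝ => ‖w' r‖ ^ 2) (Set.Ioi R₀) ∧
    IntegrableOn (fun r : ℝ => (inner ℂ (v'' r) (w r) : ℂ)) (Set.Ioi R₀) ∧
    IntegrableOn (fun r : ℝ => (inner ℂ (v' r) (w' r) : ℂ)) (Set.Ioi R₀) ∧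
    ∫ r in Set.Ioi R₀, (inner ℂ (v'' r) (w r) : ℂ) =
      - ∫ r in Set.Ioi R₀, (inner ℂ (v' r) (w' r) : ℂ) := by
  have hvanish : ∀ f : ℝ → H, (∃ δ > 0, ∀ r ∈ Ioo R₀ (R₀ + δ), f r = 0) → f =ᶠ[𝓝[>] R₀] 0 :=
    fun f ⟨δ, hδ, hf⟩ => eventually_of_mem (Ioo_mem_nhdsGT (by linarith)) hf
  -- the `L²` estimate for derivatives only involves norms: prove it over the real structure of `H`
  obtain ⟨hv'L2, hw'L2⟩ : IntegrableOn (fun r => ‖v' r‖ ^ 2) (Ioi R₀) ∧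
      IntegrableOn (fun r => ‖w' r‖ ^ 2) (Ioi R₀) := by
    let _ := InnerProductSpace.complexToReal (G := H)
    exact ⟨integrableOn_Ioi_sq_norm_deriv_of_eventuallyEq_zero hv1 hv2 hv2c hvL2 hv''L2
      (hvanish v hvvan), integrableOn_Ioi_sq_norm_deriv_of_eventuallyEq_zero hw1 hw2 hw2c hwL2
      hw''L2 (hvanish w hwvan)⟩
  have hinner : ∀ {f g : ℝ → H}, ContinuousOn f (Ioi R₀) → ContinuousOn g (Ioi R₀) →
      IntegrableOn (fun r => ‖f r‖ ^ 2) (Ioi R₀) → IntegrableOn (fun r => ‖g r‖ ^ 2) (Ioi R₀) →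
      IntegrableOn (fun r => inner ℂ (f r) (g r)) (Ioi R₀) := fun hf hg =>
    integrable_inner_of_integrable_sq_norm (hf.aestronglyMeasurable measurableSet_Ioi)
      (hg.aestronglyMeasurable measurableSet_Ioi)
  have hv''w := hinner hv2c (HasDerivAt.continuousOn hw1) hv''L2 hwL2
  have hv'w' := hinner (HasDerivAt.continuousOn hv2) (HasDerivAt.continuousOn hw2) hv'L2 hw'L2
  have hv'w := hinner (HasDerivAt.continuousOn hv2) (HasDerivAt.continuousOn hw1) hv'L2 hwL2
  refine ⟨hv'L2, hw'L2, hv''w, hv'w',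
    integral_Ioi_inner_deriv_left_eq_neg hv2 hw1 hv''w hv'w' hv'w ?_⟩
  exact tendsto_const_nhds.congr' ((hvanish w hwvan).mono fun r hr => by simp [hr])

theorem stmt_4 {H : Type*} [NormedAddCommGroup H] [InnerProductSpace ℂ H] [CompleteSpace H]
    [TopologicalSpace.SeparableSpace H]
    (R₀ : ℝ) (hR₀ : 0 < R₀) (v v' v'' w w' w'' : ℝ → H)
    (hv1 : ∀ r ∈ Set.Ioi R₀, HasDerivAt v (v' r) r)
    (hv2 : ∀ r ∈ Set.Ioi R₀, HasDerivAt v' (v'' r) r)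
    (hv2c : ContinuousOn v'' (Set.Ioi R₀))
    (hw1 : ∀ r ∈ Set.Ioi R₀, HasDerivAt w (w' r) r)
    (hw2 : ∀ r ∈ Set.Ioi R₀, HasDerivAt w' (w'' r) r)
    (hw2c : ContinuousOn w'' (Set.Ioi R₀))
    (hvL2 : IntegrableOn (fun r : ℝ => ‖v r‖ ^ 2) (Set.Ioi R₀))
    (hv''L2 : IntegrableOn (fun r : ℝ => ‖v'' r‖ ^ 2) (Set.Ioi R₀))
    (hwL2 : IntegrableOn (fun r : ℝ => ‖w r‖ ^ 2) (Set.Ioi R₀))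
    (hw''L2 : IntegrableOn (fun r : ℝ => ‖w'' r‖ ^ 2) (Set.Ioi R₀))
    (hvvan : ∃ δ > 0, ∀ r ∈ Set.Ioo R₀ (R₀ + δ), v r = 0)
    (hwvan : ∃ δ > 0, ∀ r ∈ Set.Ioo R₀ (R₀ + δ), w r = 0) :
    IntegrableOn (fun r : ℝ => ‖v' r‖ ^ 2) (Set.Ioi R₀) ∧
    IntegrableOn (fun r : ℝ => ‖w' r‖ ^ 2) (Set.Ioi R₀) ∧
    IntegrableOn (fun r : ℝ => (inner ℂ (v'' r) (w r) : ℂ)) (Set.Ioi R₀) ∧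
    IntegrableOn (fun r : ℝ => (inner ℂ (v' r) (w' r) : ℂ)) (Set.Ioi R₀) ∧
    ∫ r in Set.Ioi R₀, (inner ℂ (v'' r) (w r) : ℂ) =
      - ∫ r in Set.Ioi R₀, (inner ℂ (v' r) (w' r) : ℂ) :=
  stmt_4_general R₀ v v' v'' w w' w'' hv1 hv2 hv2c hw1 hw2 hw2c hvL2 hv''L2 hwL2 hw''L2 hvvan hwvan
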